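/- Let n ≥ 1, ω ∈ ℝ, and let δ, s ∈ ℝ^n satisfy 2|sin(δ_k/2)| ≤ s_k for all k. Then |Σ_{k=1}^n sin(ω + δ_k) − (n−1) sin(ω) − sin(ω + Σ_{k=1}^n δ_k)| ≤ (|sin(ω)| + |cos(ω)|) ( Π_{k=1}^n (1 + s_k) − Σ_{k=1}^n s_k − 1 ). -/

import Mathlib

/-!
With `u k = exp (i δ k) - 1`, the complex analogue of the remainder factors as
`-exp (i ω) (∏ (1 + u k) - 1 - ∑ u k)`, and the sine remainder is its imaginary part.
Since `‖u k‖ = 2 |sin (δ k / 2)| ≤ s k`, expanding the product bounds the norm of the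
second-order part by `∏ (1 + s k) - 1 - ∑ s k`; the prefactor `|sin ω| + |cos ω|` is at least `1`.
-/

open Finset Complex

section ProdOneAdd

variable {ι R : Type*} [NormedCommRing R] [NormOneClass R] {u : ι → R} {s : ι → ℝ}

theorem Finset.norm_prod_one_add_le_prod_one_add (t : Finset ι) (h : ∀ k ∈ t, ‖u k‖ ≤ s k) :
    ‖∏ k ∈ t, (1 + u k)‖ ≤ ∏ k ∈ t, (1 + s k) :=
  (t.norm_prod_le _).trans <| prod_le_prod (fun _ _ ↦ norm_nonneg _) fun k hk ↦
    (norm_add_le _ _).trans <| by rw [norm_one]; exact add_le_add_right (h k hk) 1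

theorem Finset.norm_prod_one_add_sub_one_le_prod_one_add_sub_one (t : Finset ι)
    (h : ∀ k ∈ t, ‖u k‖ ≤ s k) :
    ‖∏ k ∈ t, (1 + u k) - 1‖ ≤ ∏ k ∈ t, (1 + s k) - 1 := by
  induction t using Finset.cons_induction with
  | empty => simp
  | cons a t _ ih =>
    have ht : ∀ k ∈ t, ‖u k‖ ≤ s k := fun k hk ↦ h k (mem_cons_of_mem hk)
    have hua : ‖u a‖ ≤ s a := h a (mem_cons_self a t)
    rw [prod_cons, prod_cons]
    calc ‖(1 + u a) * ∏ k ∈ t, (1 + u k) - 1‖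
        = ‖(∏ k ∈ t, (1 + u k) - 1) + u a * ∏ k ∈ t, (1 + u k)‖ := by ring_nf
      _ ≤ ‖∏ k ∈ t, (1 + u k) - 1‖ + ‖u a‖ * ‖∏ k ∈ t, (1 + u k)‖ :=
          norm_add_le_of_le le_rfl (norm_mul_le _ _)
      _ ≤ (∏ k ∈ t, (1 + s k) - 1) + s a * ∏ k ∈ t, (1 + s k) := by
          gcongr
          · exact ih ht
          · exact (norm_nonneg _).trans hua
          · exact t.norm_prod_one_add_le_prod_one_add ht
      _ = (1 + s a) * ∏ k ∈ t, (1 + s k) - 1 := by ring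

theorem Finset.norm_prod_one_add_sub_one_sub_sum_le (t : Finset ι) (h : ∀ k ∈ t, ‖u k‖ ≤ s k) :
    ‖∏ k ∈ t, (1 + u k) - 1 - ∑ k ∈ t, u k‖ ≤ ∏ k ∈ t, (1 + s k) - 1 - ∑ k ∈ t, s k := by
  induction t using Finset.cons_induction with
  | empty => simp
  | cons a t _ ih =>
    have ht : ∀ k ∈ t, ‖u k‖ ≤ s k := fun k hk ↦ h k (mem_cons_of_mem hk)
    have hua : ‖u a‖ ≤ s a := h a (mem_cons_self a t)
    rw [prod_cons, prod_cons, sum_cons, sum_cons]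
    calc ‖(1 + u a) * ∏ k ∈ t, (1 + u k) - 1 - (u a + ∑ k ∈ t, u k)‖
        = ‖(∏ k ∈ t, (1 + u k) - 1 - ∑ k ∈ t, u k) + u a * (∏ k ∈ t, (1 + u k) - 1)‖ := by
          ring_nf
      _ ≤ ‖∏ k ∈ t, (1 + u k) - 1 - ∑ k ∈ t, u k‖ + ‖u a‖ * ‖∏ k ∈ t, (1 + u k) - 1‖ :=
          norm_add_le_of_le le_rfl (norm_mul_le _ _)
      _ ≤ (∏ k ∈ t, (1 + s k) - 1 - ∑ k ∈ t, s k) + s a * (∏ k ∈ t, (1 + s k) - 1) := by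
          gcongr
          · exact ih ht
          · exact (norm_nonneg _).trans hua
          · exact t.norm_prod_one_add_sub_one_le_prod_one_add_sub_one ht
      _ = (1 + s a) * ∏ k ∈ t, (1 + s k) - 1 - (s a + ∑ k ∈ t, s k) := by ring

end ProdOneAdd

/-- The remainder `ρ_g(ω, δ)` of an atom function `g` in interval superposition arithmetic. -/
def atomRemainder {ι R : Type*} [Fintype ι] [Ring R] (g : ℝ → R) (ω : ℝ) (δ : ι → ℝ) : R :=
  ∑ k, g (ω + δ k) - ((Fintype.card ι : R) - 1) * g ω - g (ω + ∑ k, δ k)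

section Exponential

variable {ι : Type*} [Fintype ι] (ω : ℝ) (δ : ι → ℝ)

theorem atomRemainder_exp_I_mul :
    atomRemainder (fun x : ℝ ↦ cexp (I * x)) ω δ =
      -(cexp (I * ω) * (∏ k, (1 + (cexp (I * δ k) - 1)) - 1 - ∑ k, (cexp (I * δ k) - 1))) := by
  simp only [atomRemainder, ofReal_add, ofReal_sum, mul_add, exp_add, mul_sum, exp_sum,
    add_sub_cancel, sum_sub_distrib, sum_const, card_univ, nsmul_eq_mul, mul_one]
  rw [← mul_sum]
  ring

theorem im_atomRemainder_exp_I_mul :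
    (atomRemainder (fun x : ℝ ↦ cexp (I * x)) ω δ).im = atomRemainder Real.sin ω δ := by
  simp only [atomRemainder, sub_im, im_sum, mul_im, mul_comm I, exp_ofReal_mul_I_im,
    exp_ofReal_mul_I_re, sub_re, natCast_re, natCast_im, one_re, one_im]
  ring

end Exponential

theorem Real.one_le_abs_sin_add_abs_cos (x : ℝ) : 1 ≤ |sin x| + |cos x| := by
  have hsin : sin x ^ 2 ≤ |sin x| := by
    rw [← sq_abs]; exact pow_le_of_le_one (abs_nonneg _) (abs_sin_le_one x) two_ne_zero
  have hcos : cos x ^ 2 ≤ |cos x| := by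
    rw [← sq_abs]; exact pow_le_of_le_one (abs_nonneg _) (abs_cos_le_one x) two_ne_zero
  linarith [sin_sq_add_cos_sq x]

theorem abs_atomRemainder_sin_le {ι : Type*} [Fintype ι] (ω : ℝ) {δ s : ι → ℝ}
    (hδs : ∀ k, 2 * |Real.sin (δ k / 2)| ≤ s k) :
    |atomRemainder Real.sin ω δ| ≤ ∏ k, (1 + s k) - 1 - ∑ k, s k := by
  have hu : ∀ k ∈ univ, ‖cexp (I * δ k) - 1‖ ≤ s k := fun k _ ↦ by
    rw [norm_exp_I_mul_ofReal_sub_one, Real.norm_eq_abs, abs_mul, abs_two]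
    exact hδs k
  calc |atomRemainder Real.sin ω δ|
      ≤ ‖atomRemainder (fun x : ℝ ↦ cexp (I * x)) ω δ‖ :=
        im_atomRemainder_exp_I_mul ω δ ▸ abs_im_le_norm _
    _ = ‖∏ k, (1 + (cexp (I * δ k) - 1)) - 1 - ∑ k, (cexp (I * δ k) - 1)‖ := by
        rw [atomRemainder_exp_I_mul, norm_neg, norm_mul, norm_exp_I_mul_ofReal, one_mul]
    _ ≤ ∏ k, (1 + s k) - 1 - ∑ k, s k := univ.norm_prod_one_add_sub_one_sub_sum_le hu

theorem stmt17_general {ι : Type*} [Fintype ι]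
    (ω : ℝ) (δ s : ι → ℝ) (hδs : ∀ k, 2 * |Real.sin (δ k / 2)| ≤ s k) :
    |(∑ k, Real.sin (ω + δ k)) - ((Fintype.card ι : ℝ) - 1) * Real.sin ω
        - Real.sin (ω + ∑ k, δ k)|
      ≤ (|Real.sin ω| + |Real.cos ω|) * ((∏ k, (1 + s k)) - (∑ k, s k) - 1) := by
  have hρ := abs_atomRemainder_sin_le ω hδs
  calc |atomRemainder Real.sin ω δ|
      ≤ 1 * (∏ k, (1 + s k) - ∑ k, s k - 1) := by linarith
    _ ≤ (|Real.sin ω| + |Real.cos ω|) * (∏ k, (1 + s k) - ∑ k, s k - 1) := by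
      gcongr
      · linarith [(abs_nonneg _).trans hρ]
      · exact Real.one_le_abs_sin_add_abs_cos ω

/-- Remainder bound for the sine atom function `g(x) = sin x` in interval
superposition arithmetic. -/
theorem stmt17 {ι : Type*} [Fintype ι] [Nonempty ι]
    (ω : ℝ) (δ s : ι → ℝ) (hδs : ∀ k, 2 * |Real.sin (δ k / 2)| ≤ s k) :
    |(∑ k, Real.sin (ω + δ k)) - ((Fintype.card ι : ℝ) - 1) * Real.sin ω
        - Real.sin (ω + ∑ k, δ k)|
      ≤ (|Real.sin ω| + |Real.cos ω|) * ((∏ k, (1 + s k)) - (∑ k, s k) - 1) :=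
  stmt17_general ω δ s hδs
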